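/- There exists a universal constant C > 0 such that for all R ∈ ℕ, ε > 0, α ∈ (0, 1/2], β ∈ (0,1), and n ≥ C·log(R/β)/(αε), there exists a pure ε-differentially private algorithm M from [R]ⁿ to distributions on [R] such that for every dataset S ∈ [R]ⁿ, with probability at least 1−β the output of M(S) is an α-robust minimum of S. -/

import Mathlib

/-!
Use the exponential mechanism with the score
`max (k - #{i | x_i ≤ r}) (#{i | x_i < r} + 1 - k)`, `k = ⌈3αn/2⌉`. Changing one entry moves each
count by at most one, so the score has sensitivity one and sampling `r` with probability
proportional to `exp (-ε · score / 2)` is `ε`-differentially private. The `k`-th smallest entry has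
score at most `0`, while every `r` that is not an `α`-robust minimum has score at least `αn/2`; hence
each such `r` has probability at most `exp (-εαn/4) ≤ β/R` once `n ≥ 4 log (R/β)/(αε)`, and a union
bound over the `R` outputs finishes the proof.
-/

/-- Two datasets differ in at most one entry. -/
def Neighboring {X : Type*} {n : ℕ} (S S' : Fin n → X) : Prop :=
  ∃ i : Fin n, ∀ j : Fin n, j ≠ i → S j = S' j

/-- Pure `ε`-differential privacy. -/
def PureDP {X : Type*} {n : ℕ} {R : Type*} (M : (Fin n → X) → PMF R) (ε : ℝ) : Prop :=
  ∀ S S' : Fin n → X, Neighboring S S' → ∀ T : Set R,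
    (M S).toOuterMeasure T ≤ ENNReal.ofReal (Real.exp ε) * (M S').toOuterMeasure T

/-- `r` is an `α`-robust minimum of `S ∈ [R]ⁿ`:
`|{i : x_i ≤ r}| ≥ αn` and `|{i : x_i < r}| ≤ 2αn`. -/
def RobustMin {n R : ℕ} (α : ℝ) (S : Fin n → Fin R) (r : Fin R) : Prop :=
  α * n ≤ ((Finset.univ.filter (fun i => S i ≤ r)).card : ℝ) ∧
  ((Finset.univ.filter (fun i => S i < r)).card : ℝ) ≤ 2 * α * n

open Finset

namespace PMF

variable {α : Type*}

theorem toOuterMeasure_le_mul_of_le {p q : PMF α} {c : ENNReal} (h : ∀ a, p a ≤ c * q a)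
    (s : Set α) : p.toOuterMeasure s ≤ c * q.toOuterMeasure s := by
  rw [toOuterMeasure_apply, toOuterMeasure_apply, ← ENNReal.tsum_mul_left]
  refine ENNReal.tsum_le_tsum fun a => ?_
  by_cases ha : a ∈ s <;> simp [ha, h a]

theorem toOuterMeasure_le_card_mul [Fintype α] (p : PMF α) {s : Set α} {c : ENNReal}
    (h : ∀ a ∈ s, p a ≤ c) : p.toOuterMeasure s ≤ Fintype.card α * c := by
  rw [toOuterMeasure_apply_fintype, ← nsmul_eq_mul, ← card_univ, ← sum_const]
  refine sum_le_sum fun a _ => ?_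
  by_cases ha : a ∈ s <;> simp [ha, h a]

theorem one_sub_toOuterMeasure_compl_le (p : PMF α) (s : Set α) :
    1 - p.toOuterMeasure sᶜ ≤ p.toOuterMeasure s := by
  rw [tsub_le_iff_right, ← p.toOuterMeasure_apply_eq_one_iff Set.univ |>.mpr (Set.subset_univ _),
    ← Set.union_compl_self s]
  exact MeasureTheory.measure_union_le s sᶜ

end PMF

theorem Neighboring.symm {X : Type*} {n : ℕ} {S S' : Fin n → X} (h : Neighboring S S') :
    Neighboring S' S :=
  let ⟨i, hi⟩ := h; ⟨i, fun j hj => (hi j hj).symm⟩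

theorem Neighboring.card_filter_le {X : Type*} {n : ℕ} {S S' : Fin n → X} (h : Neighboring S S')
    (p : X → Prop) [DecidablePred p] :
    #{i | p (S i)} ≤ #{i | p (S' i)} + 1 := by
  obtain ⟨i, hi⟩ := h
  calc #{j | p (S j)} ≤ #(insert i ({j | p (S' j)} : Finset (Fin n))) := by
        refine card_le_card fun j hj => ?_
        rcases eq_or_ne j i with rfl | hji
        · exact mem_insert_self _ _
        · simp_all
    _ ≤ _ := card_insert_le _ _

section ExponentialMechanism

variable {X Y : Type*} {n : ℕ}

noncomputable def expMechWeight (ε : ℝ) (q : (Fin n → X) → Y → ℝ) (S : Fin n → X) (y : Y) : ℝ :=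
  Real.exp (-(ε / 2) * q S y)

theorem expMechWeight_le_exp_mul {ε : ℝ} {q : (Fin n → X) → Y → ℝ} {S S' : Fin n → X} {y : Y}
    (hε : 0 ≤ ε) (hq : q S' y ≤ q S y + 1) :
    expMechWeight ε q S y ≤ Real.exp (ε / 2) * expMechWeight ε q S' y := by
  rw [expMechWeight, expMechWeight, ← Real.exp_add, Real.exp_le_exp]
  nlinarith

variable [Fintype Y]

noncomputable def expMechProb (ε : ℝ) (q : (Fin n → X) → Y → ℝ) (S : Fin n → X) (y : Y) : ℝ :=
  expMechWeight ε q S y / ∑ z, expMechWeight ε q S z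

variable {ε : ℝ} {q : (Fin n → X) → Y → ℝ}

theorem sum_expMechWeight_pos [Nonempty Y] (S : Fin n → X) : 0 < ∑ z, expMechWeight ε q S z :=
  sum_pos (fun _ _ => Real.exp_pos _) univ_nonempty

theorem expMechProb_nonneg [Nonempty Y] (S : Fin n → X) (y : Y) : 0 ≤ expMechProb ε q S y :=
  div_nonneg (Real.exp_nonneg _) (sum_expMechWeight_pos S).le

theorem sum_expMechProb [Nonempty Y] (S : Fin n → X) : ∑ y, expMechProb ε q S y = 1 := by
  unfold expMechProb
  rw [← sum_div, div_self (sum_expMechWeight_pos S).ne']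

noncomputable def expMech [Nonempty Y] (ε : ℝ) (q : (Fin n → X) → Y → ℝ) (S : Fin n → X) :
    PMF Y :=
  PMF.ofFintype (fun y => ENNReal.ofReal (expMechProb ε q S y)) <| by
    rw [← ENNReal.ofReal_sum_of_nonneg fun y _ => expMechProb_nonneg S y, sum_expMechProb,
      ENNReal.ofReal_one]

theorem expMechProb_le_exp_mul [Nonempty Y] (hε : 0 ≤ ε)
    (hq : ∀ S S' : Fin n → X, Neighboring S S' → ∀ y, q S y ≤ q S' y + 1) {S S' : Fin n → X}
    (h : Neighboring S S') (y : Y) :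
    expMechProb ε q S y ≤ Real.exp ε * expMechProb ε q S' y := by
  have hZ : Real.exp (-(ε / 2)) * ∑ z, expMechWeight ε q S' z ≤ ∑ z, expMechWeight ε q S z := by
    rw [Real.exp_neg, inv_mul_le_iff₀ (Real.exp_pos _), mul_sum]
    exact sum_le_sum fun z _ => expMechWeight_le_exp_mul hε (hq S S' h z)
  calc expMechProb ε q S y
      ≤ Real.exp (ε / 2) * expMechWeight ε q S' y
          / (Real.exp (-(ε / 2)) * ∑ z, expMechWeight ε q S' z) :=
        div_le_div₀ (mul_nonneg (Real.exp_nonneg _) (Real.exp_nonneg _)) (expMechWeight_le_exp_mul hε (hq S' S h.symm y))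
          (mul_pos (Real.exp_pos _) (sum_expMechWeight_pos S')) hZ
    _ = Real.exp ε * expMechProb ε q S' y := by
      have hsplit : Real.exp ε = Real.exp (ε / 2) * Real.exp (ε / 2) := by
        rw [← Real.exp_add, add_halves]
      rw [expMechProb, Real.exp_neg, hsplit]
      field_simp

theorem expMech_pureDP [Nonempty Y] (hε : 0 ≤ ε)
    (hq : ∀ S S' : Fin n → X, Neighboring S S' → ∀ y, q S y ≤ q S' y + 1) :
    PureDP (expMech ε q) ε := fun S S' h =>
  PMF.toOuterMeasure_le_mul_of_le fun y => by
    simp only [expMech, PMF.ofFintype_apply]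
    rw [← ENNReal.ofReal_mul (Real.exp_nonneg _)]
    exact ENNReal.ofReal_le_ofReal (expMechProb_le_exp_mul hε hq h y)

theorem expMechProb_le_exp [Nonempty Y] (hε : 0 ≤ ε) {S : Fin n → X} {y₀ y : Y} {t : ℝ}
    (hy : q S y₀ + t ≤ q S y) : expMechProb ε q S y ≤ Real.exp (-(ε / 2) * t) := by
  have hZ : expMechWeight ε q S y₀ ≤ ∑ z, expMechWeight ε q S z :=
    single_le_sum (f := expMechWeight ε q S) (fun z _ => (Real.exp_pos _).le) (mem_univ y₀)
  calc expMechProb ε q S y ≤ expMechWeight ε q S y / expMechWeight ε q S y₀ :=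
        div_le_div_of_nonneg_left (Real.exp_nonneg _) (Real.exp_pos _) hZ
    _ ≤ Real.exp (-(ε / 2) * t) := by
      rw [expMechWeight, expMechWeight, ← Real.exp_sub, Real.exp_le_exp]
      nlinarith

theorem expMech_toOuterMeasure_le [Nonempty Y] (hε : 0 ≤ ε) {S : Fin n → X} {y₀ : Y} {t : ℝ}
    {T : Set Y} (hT : ∀ y ∈ T, q S y₀ + t ≤ q S y) :
    (expMech ε q S).toOuterMeasure T ≤ Fintype.card Y * ENNReal.ofReal (Real.exp (-(ε / 2) * t)) :=
  PMF.toOuterMeasure_le_card_mul _ fun y hy =>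
    ENNReal.ofReal_le_ofReal (expMechProb_le_exp hε (hT y hy))

end ExponentialMechanism

section RankScore

variable {Y : Type*} [LinearOrder Y] {n : ℕ}

def countLE (S : Fin n → Y) (r : Y) : ℕ := #{i | S i ≤ r}

def countLT (S : Fin n → Y) (r : Y) : ℕ := #{i | S i < r}

theorem exists_le_countLE_countLT_lt (S : Fin n → Y) {k : ℕ} (hk : 0 < k) (hkn : k ≤ n) :
    ∃ r, k ≤ countLE S r ∧ countLT S r < k := by
  have hn : (univ : Finset (Fin n)).Nonempty := univ_nonempty_iff.mpr ⟨⟨0, by omega⟩⟩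
  set T := (univ.image S).filter (fun r => k ≤ countLE S r)
  have hT : T.Nonempty := by
    obtain ⟨i, -, hi⟩ := exists_mem_eq_sup' hn S
    refine ⟨S i, mem_filter.mpr ⟨mem_image.mpr ⟨i, mem_univ i, rfl⟩, ?_⟩⟩
    rw [countLE, filter_true_of_mem fun j _ => hi ▸ le_sup' S (mem_univ j), card_univ,
      Fintype.card_fin]
    exact hkn
  set r₀ := T.min' hT
  refine ⟨r₀, (mem_filter.mp (T.min'_mem hT)).2, ?_⟩
  by_contra! hlt
  have hne : ({i | S i < r₀} : Finset (Fin n)).Nonempty := card_pos.mp (by unfold countLT at hlt; omega)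
  set m := ({i | S i < r₀} : Finset (Fin n)).sup' hne S
  have hm : m ∈ T := by
    obtain ⟨i, -, hi⟩ := exists_mem_eq_sup' hne S
    refine mem_filter.mpr ⟨mem_image.mpr ⟨i, mem_univ i, hi.symm⟩, hlt.trans (card_le_card ?_)⟩
    intro j hj
    exact mem_filter.mpr ⟨mem_univ j, le_sup' S hj⟩
  exact (T.min'_le m hm).not_gt ((sup'_lt_iff hne).mpr fun i hi => (mem_filter.mp hi).2)

/-- `rankScore k S r ≤ 0` iff `r` is a `k`-th smallest entry of `S`. -/
noncomputable def rankScore (k : ℕ) (S : Fin n → Y) (r : Y) : ℝ :=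
  max ((k : ℝ) - countLE S r) ((countLT S r : ℝ) + 1 - k)

theorem rankScore_le_add_one {S S' : Fin n → Y} (h : Neighboring S S') (k : ℕ) (r : Y) :
    rankScore k S r ≤ rankScore k S' r + 1 := by
  have hle : (countLE S' r : ℝ) ≤ countLE S r + 1 := by
    exact_mod_cast h.symm.card_filter_le (· ≤ r)
  have hlt : (countLT S r : ℝ) ≤ countLT S' r + 1 := by
    exact_mod_cast h.card_filter_le (· < r)
  unfold rankScore
  refine max_le ?_ ?_
  · linarith [le_max_left ((k : ℝ) - countLE S' r) ((countLT S' r : ℝ) + 1 - k)]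
  · linarith [le_max_right ((k : ℝ) - countLE S' r) ((countLT S' r : ℝ) + 1 - k)]

theorem exists_rankScore_nonpos (S : Fin n → Y) {k : ℕ} (hk : 0 < k) (hkn : k ≤ n) :
    ∃ r, rankScore k S r ≤ 0 := by
  obtain ⟨r, hle, hlt⟩ := exists_le_countLE_countLT_lt S hk hkn
  refine ⟨r, max_le ?_ ?_⟩
  · simpa using (Nat.cast_le (α := ℝ)).mpr hle
  · have : (countLT S r : ℝ) + 1 ≤ k := by exact_mod_cast hlt
    linarith

end RankScore

theorem le_rankScore_of_not_robustMin {R n : ℕ} {α : ℝ} (hα : 0 ≤ α) {S : Fin n → Fin R}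
    {r : Fin R} (hr : ¬RobustMin α S r) : α * n / 2 ≤ rankScore ⌈3 * α * n / 2⌉₊ S r := by
  have hk := Nat.le_ceil (3 * α * n / 2)
  have hk' := Nat.ceil_lt_add_one (show 0 ≤ 3 * α * n / 2 by positivity)
  rw [RobustMin, not_and_or, not_le, not_le] at hr
  unfold rankScore
  rcases hr with hr | hr
  · exact le_max_of_le_left (by unfold countLE; linarith)
  · exact le_max_of_le_right (by unfold countLT; linarith)

theorem mul_exp_neg_le_of_log_div_le {R β x : ℝ} (hR : 0 < R) (hβ : 0 < β)
    (hx : Real.log (R / β) ≤ x) : R * Real.exp (-x) ≤ β := by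
  calc R * Real.exp (-x) ≤ R * Real.exp (-Real.log (R / β)) := by gcongr
    _ = β := by
      rw [Real.exp_neg, Real.exp_log (div_pos hR hβ)]
      field_simp

/-- **Theorem 3.7(1): pure-private robust minimum (`Min_pure`).**
There is a universal constant `C > 0` such that for all `R`, `ε > 0`, `α ∈ (0,1/2]`,
`β ∈ (0,1)`, and `n ≥ C·log(R/β)/(αε)`, there is a pure `ε`-differentially private
algorithm `M : [R]ⁿ → Δ([R])` which on every dataset `S` outputs an `α`-robust minimum
of `S` with probability at least `1−β`. -/
theorem stmt_10 :
    ∃ C : ℝ, 0 < C ∧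
      ∀ (R : ℕ), 1 ≤ R → ∀ (ε : ℝ), 0 < ε → ∀ α : ℝ, α ∈ Set.Ioc (0:ℝ) (1/2) →
      ∀ β : ℝ, β ∈ Set.Ioo (0:ℝ) 1 →
      ∀ n : ℕ, C * Real.log ((R : ℝ) / β) / (α * ε) ≤ (n : ℝ) →
        ∃ M : (Fin n → Fin R) → PMF (Fin R),
          PureDP M ε ∧
          ∀ S : Fin n → Fin R, ENNReal.ofReal (1 - β) ≤
            (M S).toOuterMeasure {r : Fin R | RobustMin α S r} := by
  refine ⟨4, by norm_num, fun R hR ε hε α ⟨hα0, hα⟩ β ⟨hβ0, hβ1⟩ n hn => ?_⟩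
  have : NeZero R := ⟨by omega⟩
  have hRpos : (0 : ℝ) < R := by exact_mod_cast hR
  have hlog : 0 < Real.log (R / β) :=
    Real.log_pos ((one_lt_div hβ0).mpr (hβ1.trans_le (by exact_mod_cast hR)))
  rw [div_le_iff₀ (by positivity)] at hn
  have han : 0 < α * n := by nlinarith
  refine ⟨expMech ε (rankScore ⌈3 * α * n / 2⌉₊), expMech_pureDP hε.le
    fun _ _ h r => rankScore_le_add_one h _ r, fun S => ?_⟩
  obtain ⟨r₀, hr₀⟩ := exists_rankScore_nonpos S (k := ⌈3 * α * n / 2⌉₊)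
    (Nat.one_le_ceil_iff.mpr (by linarith)) (Nat.ceil_le.mpr (by nlinarith))
  have hbad := expMech_toOuterMeasure_le (q := rankScore ⌈3 * α * n / 2⌉₊) (S := S) (y₀ := r₀)
    (t := α * n / 2) (T := {r | RobustMin α S r}ᶜ) hε.le
    fun r hr => by linarith [le_rankScore_of_not_robustMin hα0.le hr]
  have hβR : (R : ENNReal) * ENNReal.ofReal (Real.exp (-(ε / 2) * (α * n / 2)))
      ≤ ENNReal.ofReal β := by
    rw [← ENNReal.ofReal_natCast, ← ENNReal.ofReal_mul hRpos.le, neg_mul]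
    exact ENNReal.ofReal_le_ofReal (mul_exp_neg_le_of_log_div_le hRpos hβ0 (by nlinarith))
  calc ENNReal.ofReal (1 - β) = 1 - ENNReal.ofReal β := by
        rw [ENNReal.ofReal_sub 1 hβ0.le, ENNReal.ofReal_one]
    _ ≤ 1 - (expMech ε (rankScore ⌈3 * α * n / 2⌉₊) S).toOuterMeasure {r | RobustMin α S r}ᶜ :=
        tsub_le_tsub_left (hbad.trans (by simpa using hβR)) 1
    _ ≤ _ := PMF.one_sub_toOuterMeasure_compl_le _ _
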